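/- Let P, Q, R ∈ B be points of infinite order. If for almost every v ∈ V there exist integers x, y, z with gcd(x, y, z) = 1 and a torsion point T ∈ B_tors (all possibly depending on v) such that x²P + y²Q + z²R = T mod v, then P, Q, R are linearly dependent over ℤ; that is, there exist integers a, b, c, not all zero, with aP + bQ + cR = 0. -/

import Mathlib

/-!
Suppose `P`, `Q`, `R` are independent. Choose a prime `l` that is odd and larger than the exponent
of `B_tors`, and a quadratic non-residue `t` modulo `l`. The points `P`, `Q + tR`, `R` are still
independent, so there is a `v` where the form has a solution and where the orders of `P`, `Q + tR`,
`R` modulo `v` have `l`-adic valuations `2`, `0`, `1`. Rewriting the relation as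
`x²P + y²(Q + tR) + (z² - ty²)R = T` and killing everything prime to `l`, the valuations force
`l ∣ x` and `l ∣ z² - ty²`; as `t` is a non-residue, also `l ∣ y` and `l ∣ z`, against
`gcd(x, y, z) = 1`.
-/

theorem linearIndependent_fin_three_iff {R M : Type*} [Ring R] [AddCommGroup M] [Module R M]
    {x y z : M} :
    LinearIndependent R ![x, y, z] ↔
      ∀ a b c : R, a • x + b • y + c • z = 0 → a = 0 ∧ b = 0 ∧ c = 0 := by
  simp only [Fintype.linearIndependent_iff, Fin.sum_univ_three, Fin.forall_fin_succ,
    Matrix.cons_val_zero, Matrix.cons_val_one, Matrix.cons_val_two, Matrix.head_cons,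
    Matrix.tail_cons, IsEmpty.forall_iff, and_true]
  refine ⟨fun h a b c habc => h ![a, b, c] habc, fun h g hg => h _ _ _ hg⟩

theorem LinearIndependent.fin_three_add_smul {R M : Type*} [CommRing R] [AddCommGroup M]
    [Module R M] {x y z : M} (h : LinearIndependent R ![x, y, z]) (t : R) :
    LinearIndependent R ![x, y + t • z, z] := by
  rw [linearIndependent_fin_three_iff] at h ⊢
  intro a b c habc
  obtain ⟨ha, hb, hbc⟩ := h a b (b * t + c) (by rw [← habc]; module)
  simp_all

theorem exists_pos_nsmul_eq_zero_of_finite_torsion {B : Type*} [AddCommGroup B]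
    (h : {T : B | IsOfFinAddOrder T}.Finite) :
    ∃ N : ℕ, 0 < N ∧ ∀ T : B, IsOfFinAddOrder T → N • T = 0 := by
  have : Finite (AddCommGroup.torsion B) := h.to_subtype
  refine ⟨AddMonoid.exponent (AddCommGroup.torsion B),
    Nat.pos_of_ne_zero AddMonoid.exponent_ne_zero_of_finite, fun T hT => ?_⟩
  exact congrArg Subtype.val (AddMonoid.exponent_nsmul_eq_zero (⟨T, hT⟩ : AddCommGroup.torsion B))

theorem ZMod.exists_int_not_isSquare {l : ℕ} [Fact l.Prime] (hl : l ≠ 2) :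
    ∃ t : ℤ, ¬ IsSquare (t : ZMod l) := by
  obtain ⟨t, ht⟩ := FiniteField.exists_nonsquare (F := ZMod l) (by rwa [ZMod.ringChar_zmod_n])
  obtain ⟨n, rfl⟩ := ZMod.intCast_surjective t
  exact ⟨n, ht⟩

theorem Int.prime_dvd_of_dvd_sq_sub_mul_sq {l : ℕ} [Fact l.Prime] {t y z : ℤ}
    (ht : ¬ IsSquare (t : ZMod l)) (h : (l : ℤ) ∣ z ^ 2 - t * y ^ 2) :
    (l : ℤ) ∣ y ∧ (l : ℤ) ∣ z := by
  simp only [← ZMod.intCast_zmod_eq_zero_iff_dvd] at h ⊢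
  push_cast at h
  have hy : (y : ZMod l) = 0 := by
    by_contra hy
    exact ht ⟨z / y, by field_simp; linear_combination -h⟩
  rw [hy] at h
  exact ⟨hy, pow_eq_zero_iff two_ne_zero |>.mp (by simpa using h)⟩

section AddOrder

variable {G : Type*} [AddCommGroup G]

theorem prime_pow_dvd_of_mul_zsmul_eq_zero {g : G} {l k : ℕ}
    (hl : l.Prime) (hk : l ^ k ∣ addOrderOf g) {m n : ℤ} (hm : ¬ (l : ℤ) ∣ m)
    (h : (m * n) • g = 0) : (l : ℤ) ^ k ∣ n := by
  have hcop : IsCoprime ((l : ℤ) ^ k) m :=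
    ((Nat.prime_iff_prime_int.mp hl).coprime_iff_not_dvd.mpr hm).pow_left
  refine hcop.dvd_of_dvd_mul_left (dvd_trans ?_ (addOrderOf_dvd_iff_zsmul_eq_zero.mpr h))
  exact_mod_cast hk

theorem prime_dvd_of_sq_zsmul_add_zsmul_eq_zero {p q : G} {l : ℕ}
    (hl : l.Prime) (hp : l ^ 2 ∣ addOrderOf p ∧ ¬ l ^ 3 ∣ addOrderOf p)
    (hq : l ∣ addOrderOf q ∧ ¬ l ^ 2 ∣ addOrderOf q) {m x b : ℤ} (hm : ¬ (l : ℤ) ∣ m)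
    (h : (m * x ^ 2) • p + (m * b) • q = 0) : (l : ℤ) ∣ x ∧ (l : ℤ) ∣ b := by
  have hlZ : Prime (l : ℤ) := Nat.prime_iff_prime_int.mp hl
  obtain ⟨c, hc⟩ := hq.1
  have hlc : ¬ l ∣ c := fun ⟨d, hd⟩ => hq.2 ⟨d, by rw [hc, hd]; ring⟩
  have hqc : (l * c : ℤ) • q = 0 := by
    exact_mod_cast (hc ▸ addOrderOf_nsmul_eq_zero q : (l * c) • q = 0)
  have hx : (l : ℤ) ∣ x := by
    have hlx : ((c * m) * (l * x ^ 2)) • p = 0 := by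
      calc ((c * m) * (l * x ^ 2)) • p
          = (l * c : ℤ) • ((m * x ^ 2) • p + (m * b) • q) - (m * b) • ((l * c : ℤ) • q) := by
            module
        _ = 0 := by rw [h, hqc]; simp
    have := prime_pow_dvd_of_mul_zsmul_eq_zero hl hp.1
      (hlZ.not_dvd_mul (Int.natCast_dvd_natCast.not.mpr hlc) hm) hlx
    rw [pow_two, mul_dvd_mul_iff_left (by exact_mod_cast hl.ne_zero)] at this
    exact hlZ.dvd_of_dvd_pow this
  obtain ⟨a, ha⟩ := hp.1
  have hla : ¬ l ∣ a := fun ⟨d, hd⟩ => hp.2 ⟨d, by rw [ha, hd]; ring⟩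
  have hpx : (a * (m * x ^ 2)) • p = 0 := by
    obtain ⟨x₀, rfl⟩ := hx
    rw [show a * (m * (l * x₀) ^ 2) = (m * x₀ ^ 2) * (l ^ 2 * a : ℕ) by push_cast; ring, mul_smul,
      ← ha, natCast_zsmul, addOrderOf_nsmul_eq_zero, smul_zero]
  have hqb : ((a * m) * b) • q = 0 := by
    calc ((a * m) * b) • q = a • ((m * x ^ 2) • p + (m * b) • q) - (a * (m * x ^ 2)) • p := by
          module
      _ = 0 := by rw [h, hpx]; simp
  refine ⟨hx, ?_⟩
  simpa using prime_pow_dvd_of_mul_zsmul_eq_zero (k := 1) hl (by simpa using hq.1)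
    (hlZ.not_dvd_mul (Int.natCast_dvd_natCast.not.mpr hla) hm) hqb

theorem prime_dvd_of_sq_zsmul_add_sq_zsmul_add_zsmul_eq {p s q τ : G} {l N : ℕ} (hl : l.Prime)
    (hp : l ^ 2 ∣ addOrderOf p ∧ ¬ l ^ 3 ∣ addOrderOf p)
    (hs : ¬ l ∣ addOrderOf s) (hq : l ∣ addOrderOf q ∧ ¬ l ^ 2 ∣ addOrderOf q)
    (hN : ¬ l ∣ N) (hτ : N • τ = 0) {x y b : ℤ} (h : x ^ 2 • p + y ^ 2 • s + b • q = τ) :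
    (l : ℤ) ∣ x ∧ (l : ℤ) ∣ b := by
  set m : ℤ := N * addOrderOf s with hm_def
  have hm : ¬ (l : ℤ) ∣ m := (Nat.prime_iff_prime_int.mp hl).not_dvd_mul
    (Int.natCast_dvd_natCast.not.mpr hN) (Int.natCast_dvd_natCast.not.mpr hs)
  have hmτ : m • τ = 0 := by
    rw [hm_def, mul_comm, mul_smul, natCast_zsmul, natCast_zsmul, hτ, smul_zero]
  have hms : m • s = 0 := by
    rw [hm_def, mul_smul, natCast_zsmul, natCast_zsmul, addOrderOf_nsmul_eq_zero, smul_zero]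
  refine prime_dvd_of_sq_zsmul_add_zsmul_eq_zero hl hp hq hm ?_
  calc (m * x ^ 2) • p + (m * b) • q = m • (x ^ 2 • p + y ^ 2 • s + b • q) - y ^ 2 • m • s := by
        module
    _ = 0 := by rw [h, hmτ, hms, smul_zero, sub_zero]

end AddOrder

theorem stmt_3_general
    {V : Type*}
    {B : Type*} [AddCommGroup B]
    (Bv : V → Type*) [∀ v, AddCommGroup (Bv v)]
    (r : ∀ v : V, B →+ Bv v)
    (htors : {T : B | IsOfFinAddOrder T}.Finite)
    (h1 : ∀ l : ℕ, l.Prime → ∀ (m : ℕ) (Pts : Fin m → B), LinearIndependent ℤ Pts →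
      ∀ k : Fin m → ℕ,
        {v : V | ∀ i : Fin m,
          l ^ (k i) ∣ addOrderOf (r v (Pts i)) ∧
          ¬ l ^ (k i + 1) ∣ addOrderOf (r v (Pts i))}.Infinite)
    (P Q R : B)
    (h : {v : V | ¬ ∃ (x y z : ℤ) (T : B), Int.gcd x (Int.gcd y z) = 1 ∧
        IsOfFinAddOrder T ∧
        r v (x ^ 2 • P + y ^ 2 • Q + z ^ 2 • R) = r v T}.Finite) :
    ∃ a b c : ℤ, ¬ (a = 0 ∧ b = 0 ∧ c = 0) ∧ a • P + b • Q + c • R = 0 := by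
  by_contra hdep
  have hind : LinearIndependent ℤ ![P, Q, R] :=
    linearIndependent_fin_three_iff.mpr fun a b c habc => by
      by_contra hne
      exact hdep ⟨a, b, c, hne, habc⟩
  obtain ⟨N, hN, hNT⟩ := exists_pos_nsmul_eq_zero_of_finite_torsion htors
  obtain ⟨l, hlN, hl⟩ := Nat.exists_infinite_primes (N + 3)
  have : Fact l.Prime := ⟨hl⟩
  obtain ⟨t, ht⟩ := ZMod.exists_int_not_isSquare (l := l) (by omega)
  obtain ⟨v, hv, hsol⟩ :=
    ((h1 l hl 3 _ (hind.fin_three_add_smul t) ![2, 0, 1]).sdiff h).nonempty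
  obtain ⟨x, y, z, T, hgcd, hT, hxyz⟩ := not_not.mp hsol
  have hvP := hv 0
  have hvS := hv 1
  have hvR := hv 2
  simp only [Fin.isValue, Matrix.cons_val_zero, Matrix.cons_val_one, Matrix.cons_val, pow_zero,
    pow_one, zero_add, Nat.reduceAdd, one_dvd, true_and, map_add, map_zsmul] at hvP hvS hvR
  have hrel :
      x ^ 2 • r v P + y ^ 2 • (r v Q + t • r v R) + (z ^ 2 - t * y ^ 2) • r v R = r v T := by
    rw [← hxyz, map_add, map_add, map_zsmul, map_zsmul, map_zsmul]
    module
  obtain ⟨hx, hzy⟩ := prime_dvd_of_sq_zsmul_add_sq_zsmul_add_zsmul_eq hl hvP hvS hvR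
    (Nat.not_dvd_of_pos_of_lt hN (by omega)) (by rw [← map_nsmul, hNT T hT, map_zero]) hrel
  obtain ⟨hy, hz⟩ := Int.prime_dvd_of_dvd_sq_sub_mul_sq ht hzy
  have hl1 := Int.dvd_coe_gcd hx (Int.dvd_coe_gcd hy hz)
  rw [hgcd, Int.natCast_dvd_natCast, Nat.dvd_one] at hl1
  exact hl.one_lt.ne' hl1

/-- If the rank-3 form `x²P + y²Q + z²R` represents a torsion point modulo
almost every `v`, then `P`, `Q`, `R` are linearly dependent over `ℤ`. -/
theorem stmt_3
    {V : Type*} [Infinite V]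
    {B : Type*} [AddCommGroup B]
    (Bv : V → Type*) [∀ v, AddCommGroup (Bv v)] [∀ v, Finite (Bv v)]
    (r : ∀ v : V, B →+ Bv v)
    (htors : {T : B | IsOfFinAddOrder T}.Finite)
    (h1 : ∀ l : ℕ, l.Prime → ∀ (m : ℕ) (Pts : Fin m → B), LinearIndependent ℤ Pts →
      ∀ k : Fin m → ℕ,
        {v : V | ∀ i : Fin m,
          l ^ (k i) ∣ addOrderOf (r v (Pts i)) ∧
          ¬ l ^ (k i + 1) ∣ addOrderOf (r v (Pts i))}.Infinite)
    (h2 : {v : V | ¬ Set.InjOn (r v) {T : B | IsOfFinAddOrder T}}.Finite)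
    (P Q R : B) (hP : ¬ IsOfFinAddOrder P) (hQ : ¬ IsOfFinAddOrder Q)
    (hR : ¬ IsOfFinAddOrder R)
    (h : {v : V | ¬ ∃ (x y z : ℤ) (T : B), Int.gcd x (Int.gcd y z) = 1 ∧
        IsOfFinAddOrder T ∧
        r v (x ^ 2 • P + y ^ 2 • Q + z ^ 2 • R) = r v T}.Finite) :
    ∃ a b c : ℤ, ¬ (a = 0 ∧ b = 0 ∧ c = 0) ∧ a • P + b • Q + c • R = 0 :=
  stmt_3_general Bv r htors h1 P Q R h
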